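/- Let S be a finite set with at least two elements and (P_t)_{t≥0} a sequence of row-stochastic S × S real matrices. Then for every t ≥ 0 and m ≥ 1, the maximum row sum of V_t^{(m)} equals 1 − α_t^{(m)}, i.e., ‖V_t^{(m)}‖_∞ = 1 − α_t^{(m)}, and for all integers m ≥ 1 and k ≥ 1, sup_{x,x'∈S} max_{A ⊆ S} (P_{0,km}(x, A) − P_{0,km}(x', A)) ≤ ∏_{t=0}^{k−1} ‖V_{tm}^{(m)}‖_∞. -/

import Mathlib

/-- The `overlap coefficient` of rows `x1` and `x2` of the matrix `Q`:
`α(x1,x2) := ∑_y min(Q(x1,y), Q(x2,y))`. -/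
noncomputable def mdCoeff {S : Type*} [Fintype S] (Q : Matrix S S ℝ) (x1 x2 : S) : ℝ :=
  ∑ y, min (Q x1 y) (Q x2 y)

/-- The coupling matrix `V` associated with the transition matrix `Q`, indexed
by pairs of states. -/
noncomputable def couplingMatrix {S : Type*} [Fintype S] [DecidableEq S]
    (Q : Matrix S S ℝ) : Matrix (S × S) (S × S) ℝ :=
  fun p q =>
    if p.1 = p.2 ∨ mdCoeff Q p.1 p.2 = 1 then 0
    else (Q p.1 q.1 - min (Q p.1 q.1) (Q p.2 q.1)) *
         (Q p.2 q.2 - min (Q p.1 q.2) (Q p.2 q.2)) / (1 - mdCoeff Q p.1 p.2)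

/-- `transMat P s k` is the transition matrix of the non-homogeneous chain
with one-step matrices `(P t)` from time `s` to time `s + k`:
`P_{s,s+k} = P_s ⬝ P_{s+1} ⬝ ⋯ ⬝ P_{s+k-1}` (the identity when `k = 0`). -/
noncomputable def transMat {S : Type*} [Fintype S] [DecidableEq S]
    (P : ℕ → Matrix S S ℝ) : ℕ → ℕ → Matrix S S ℝ
  | _, 0 => 1
  | s, k + 1 => P s * transMat P (s + 1) k

section Aux

set_option linter.unusedSectionVars false

variable {S : Type*} [Fintype S] [DecidableEq S]

lemma sub_min_eq_max' (a b : ℝ) : a - min a b = max (a - b) 0 := by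
  rcases le_total a b with h | h
  · simp [min_eq_left h, max_eq_right (sub_nonpos.mpr h)]
  · simp [min_eq_right h, max_eq_left (sub_nonneg.mpr h)]

lemma mdCoeff_le_one (Q : Matrix S S ℝ) (x1 x2 : S) (h1 : ∑ y, Q x1 y = 1) :
    mdCoeff Q x1 x2 ≤ 1 := by
  rw [mdCoeff, ← h1]
  exact Finset.sum_le_sum fun y _ => min_le_left _ _

lemma posPart_sum_eq (Q : Matrix S S ℝ) (x1 x2 : S) (h1 : ∑ y, Q x1 y = 1) :
    ∑ y, max (Q x1 y - Q x2 y) 0 = 1 - mdCoeff Q x1 x2 := by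
  simp only [← sub_min_eq_max']
  rw [Finset.sum_sub_distrib, h1, mdCoeff]

lemma rowsum_abs_coupling (Q : Matrix S S ℝ)
    (h1 : ∀ x, ∑ y, Q x y = 1) (p : S × S) :
    ∑ q : S × S, |couplingMatrix Q p q| = 1 - mdCoeff Q p.1 p.2 := by
  by_cases h : p.1 = p.2 ∨ mdCoeff Q p.1 p.2 = 1
  · have hα : mdCoeff Q p.1 p.2 = 1 := by
      rcases h with h | h
      · rw [mdCoeff, h]; simp [h1 p.2]
      · exact h
    simp [couplingMatrix, h, hα]
  · push_neg at h
    have hαlt : mdCoeff Q p.1 p.2 < 1 :=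
      lt_of_le_of_ne (mdCoeff_le_one Q _ _ (h1 p.1)) h.2
    have hc : (0:ℝ) < 1 - mdCoeff Q p.1 p.2 := by linarith
    have hneg : ¬ (p.1 = p.2 ∨ mdCoeff Q p.1 p.2 = 1) := by push_neg; exact h
    have habs : ∀ q : S × S, |couplingMatrix Q p q| = couplingMatrix Q p q := by
      intro q
      apply abs_of_nonneg
      rw [couplingMatrix, if_neg hneg]
      exact div_nonneg (mul_nonneg (sub_nonneg.mpr (min_le_left _ _))
        (sub_nonneg.mpr (min_le_right _ _))) hc.le
    rw [Finset.sum_congr rfl fun q _ => habs q]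
    have hcm : ∀ q : S × S, couplingMatrix Q p q = (Q p.1 q.1 - min (Q p.1 q.1) (Q p.2 q.1)) *
        (Q p.2 q.2 - min (Q p.1 q.2) (Q p.2 q.2)) / (1 - mdCoeff Q p.1 p.2) := fun q => by
      rw [couplingMatrix, if_neg hneg]
    simp only [hcm]
    rw [Fintype.sum_prod_type]
    have hinner : ∀ y1, ∑ y2, (Q p.1 y1 - min (Q p.1 y1) (Q p.2 y1)) *
        (Q p.2 y2 - min (Q p.1 y2) (Q p.2 y2)) / (1 - mdCoeff Q p.1 p.2)
        = (Q p.1 y1 - min (Q p.1 y1) (Q p.2 y1)) *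
          (∑ y2, (Q p.2 y2 - min (Q p.1 y2) (Q p.2 y2))) / (1 - mdCoeff Q p.1 p.2) := by
      intro y1
      rw [← Finset.sum_div, ← Finset.mul_sum]
    have hs2 : ∑ y2, (Q p.2 y2 - min (Q p.1 y2) (Q p.2 y2)) = 1 - mdCoeff Q p.1 p.2 := by
      rw [Finset.sum_sub_distrib, h1 p.2, mdCoeff]
    have hs1 : ∑ y1, (Q p.1 y1 - min (Q p.1 y1) (Q p.2 y1)) = 1 - mdCoeff Q p.1 p.2 := by
      rw [Finset.sum_sub_distrib, h1 p.1, mdCoeff]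
    rw [Finset.sum_congr rfl fun y1 _ => hinner y1]
    rw [hs2, ← Finset.sum_div, ← Finset.sum_mul, hs1]
    field_simp

lemma transMat_nonneg (P : ℕ → Matrix S S ℝ) (h0 : ∀ t x y, 0 ≤ P t x y) :
    ∀ k s x y, 0 ≤ transMat P s k x y := by
  intro k
  induction k with
  | zero =>
    intro s x y
    simp only [transMat, Matrix.one_apply]
    split <;> norm_num
  | succ n ih =>
    intro s x y
    simp only [transMat, Matrix.mul_apply]
    exact Finset.sum_nonneg fun z _ => mul_nonneg (h0 s x z) (ih (s+1) z y)

lemma transMat_rowsum (P : ℕ → Matrix S S ℝ) (h1 : ∀ t x, ∑ y, P t x y = 1) :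
    ∀ k s x, ∑ y, transMat P s k x y = 1 := by
  intro k
  induction k with
  | zero =>
    intro s x
    simp [transMat, Matrix.one_apply]
  | succ n ih =>
    intro s x
    simp only [transMat, Matrix.mul_apply]
    rw [Finset.sum_comm]
    calc ∑ z, ∑ y, P s x z * transMat P (s+1) n z y
        = ∑ z, P s x z * ∑ y, transMat P (s+1) n z y :=
          Finset.sum_congr rfl fun z _ => (Finset.mul_sum _ _ _).symm
      _ = ∑ z, P s x z :=
          Finset.sum_congr rfl fun z _ => by rw [ih (s+1) z, mul_one]
      _ = 1 := h1 s x

lemma transMat_add (P : ℕ → Matrix S S ℝ) :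
    ∀ a s b, transMat P s (a + b) = transMat P s a * transMat P (s + a) b := by
  intro a
  induction a with
  | zero => intro s b; simp [transMat]
  | succ n ih =>
    intro s b
    have h : n + 1 + b = (n + b) + 1 := by ring
    rw [h]
    show P s * transMat P (s + 1) (n + b)
        = (P s * transMat P (s + 1) n) * transMat P (s + (n+1)) b
    rw [ih (s+1) b, show s + 1 + n = s + (n + 1) from by omega, Matrix.mul_assoc]

lemma posPart_sum_le_one (Q : Matrix S S ℝ) (u v : S)
    (h0 : ∀ x y, 0 ≤ Q x y) (h1 : ∑ y, Q u y = 1) :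
    ∑ y, max (Q u y - Q v y) 0 ≤ 1 := by
  rw [← h1]
  refine Finset.sum_le_sum fun y _ => ?_
  exact max_le (by have := h0 v y; linarith) (h0 u y)

lemma key_core (c r : S → ℝ) (D : ℝ) (hc0 : ∑ z, c z = 0) (hD0 : 0 ≤ D)
    (hrd : ∀ y z : S, r y - r z ≤ D) :
    ∑ z, c z * r z ≤ (∑ z, max (c z) 0) * D := by
  have ha0 : ∀ z : S, (0:ℝ) ≤ max (c z) 0 := fun z => le_max_right _ _
  have hb0 : ∀ z : S, (0:ℝ) ≤ max (-c z) 0 := fun z => le_max_right _ _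
  have hab : ∀ z, c z = max (c z) 0 - max (-c z) 0 :=
    fun z => (max_zero_sub_max_neg_zero_eq_self (c z)).symm
  have hβb : ∑ z, max (-c z) 0 = ∑ z, max (c z) 0 := by
    have h' : ∑ z, (max (c z) 0 - max (-c z) 0) = 0 := by
      rw [Finset.sum_congr rfl fun z _ => (hab z).symm]
      exact hc0
    rw [Finset.sum_sub_distrib] at h'
    linarith
  set β := ∑ z, max (c z) 0 with hβdef
  have hβ0 : 0 ≤ β := Finset.sum_nonneg fun z _ => ha0 z
  have hid : ∑ y, ∑ z, max (c y) 0 * max (-c z) 0 * (r y - r z)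
      = β * (∑ z, c z * r z) := by
    have h1 : ∀ y : S, ∑ z, max (c y) 0 * max (-c z) 0 * (r y - r z)
        = (max (c y) 0 * r y) * (∑ z, max (-c z) 0)
          - max (c y) 0 * (∑ z, max (-c z) 0 * r z) := by
      intro y
      rw [Finset.mul_sum, Finset.mul_sum, ← Finset.sum_sub_distrib]
      exact Finset.sum_congr rfl fun z _ => by ring
    rw [Finset.sum_congr rfl fun y _ => h1 y]
    rw [Finset.sum_sub_distrib, ← Finset.sum_mul, ← Finset.sum_mul, hβb, ← hβdef]
    have h2 : ∑ z, c z * r z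
        = ∑ z, max (c z) 0 * r z - ∑ z, max (-c z) 0 * r z := by
      rw [← Finset.sum_sub_distrib]
      exact Finset.sum_congr rfl fun z _ => by rw [← sub_mul, ← hab z]
    rw [h2]
    ring
  have hbound : ∑ y, ∑ z, max (c y) 0 * max (-c z) 0 * (r y - r z) ≤ β * (β * D) := by
    have h3 : ∀ y : S, ∑ z, max (c y) 0 * max (-c z) 0 * D
        = max (c y) 0 * (β * D) := by
      intro y
      calc ∑ z, max (c y) 0 * max (-c z) 0 * D
          = max (c y) 0 * ∑ z, max (-c z) 0 * D := by
            rw [Finset.mul_sum]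
            exact Finset.sum_congr rfl fun z _ => mul_assoc _ _ _
        _ = max (c y) 0 * ((∑ z, max (-c z) 0) * D) := by
            rw [Finset.sum_mul]
        _ = max (c y) 0 * (β * D) := by rw [hβb]
    calc ∑ y, ∑ z, max (c y) 0 * max (-c z) 0 * (r y - r z)
        ≤ ∑ y, ∑ z, max (c y) 0 * max (-c z) 0 * D := by
          refine Finset.sum_le_sum fun y _ => Finset.sum_le_sum fun z _ => ?_
          exact mul_le_mul_of_nonneg_left (hrd y z) (mul_nonneg (ha0 y) (hb0 z))
      _ = ∑ y, max (c y) 0 * (β * D) := Finset.sum_congr rfl fun y _ => h3 y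
      _ = β * (β * D) := by rw [← Finset.sum_mul, ← hβdef]
  rcases eq_or_lt_of_le hβ0 with hβ | hβ
  · have hsum0 : ∑ z, max (c z) 0 = 0 := by rw [← hβdef]; exact hβ.symm
    have hcle : ∀ z ∈ (Finset.univ : Finset S), c z ≤ 0 := by
      intro z _
      have ha : max (c z) 0 = 0 :=
        (Finset.sum_eq_zero_iff_of_nonneg (fun z _ => ha0 z)).mp hsum0 z (Finset.mem_univ z)
      have : c z ≤ max (c z) 0 := le_max_left _ _
      linarith
    have hcz := (Finset.sum_eq_zero_iff_of_nonpos hcle).mp hc0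
    have h0 : ∑ z, c z * r z = 0 :=
      Finset.sum_eq_zero fun z hz => by rw [hcz z hz, zero_mul]
    rw [h0]
    exact mul_nonneg hβ0 hD0
  · have h4 : β * (∑ z, c z * r z) ≤ β * (β * D) := hid ▸ hbound
    exact le_of_mul_le_mul_left h4 hβ

lemma key_step (Q R : Matrix S S ℝ) (hQ1 : ∀ x, ∑ y, Q x y = 1)
    (D : ℝ) (hD : ∀ y z : S, ∑ w, max (R y w - R z w) 0 ≤ D)
    (x x' : S) (A : Finset S) :
    ∑ y ∈ A, (Q * R) x y - ∑ y ∈ A, (Q * R) x' y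
      ≤ (∑ y, max (Q x y - Q x' y) 0) * D := by
  have hD0 : 0 ≤ D := by
    have h := hD x x
    have h2 : ∑ w : S, max (R x w - R x w) 0 = 0 := by simp
    linarith
  have expand : ∀ u : S, ∑ y ∈ A, (Q * R) u y = ∑ z, Q u z * (∑ y ∈ A, R z y) := by
    intro u
    simp only [Matrix.mul_apply]
    rw [Finset.sum_comm]
    exact Finset.sum_congr rfl fun z _ => (Finset.mul_sum _ _ _).symm
  have hgoal : ∑ y ∈ A, (Q * R) x y - ∑ y ∈ A, (Q * R) x' y
      = ∑ z, (Q x z - Q x' z) * (∑ y ∈ A, R z y) := by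
    rw [expand x, expand x', ← Finset.sum_sub_distrib]
    exact Finset.sum_congr rfl fun z _ => by ring
  rw [hgoal]
  exact key_core (fun z => Q x z - Q x' z) (fun z => ∑ y ∈ A, R z y) D
    (by rw [Finset.sum_sub_distrib, hQ1 x, hQ1 x']; ring) hD0
    (fun y z => by
      calc (∑ w ∈ A, R y w) - ∑ w ∈ A, R z w
          = ∑ w ∈ A, (R y w - R z w) := (Finset.sum_sub_distrib _ _).symm
        _ ≤ ∑ w ∈ A, max (R y w - R z w) 0 :=
            Finset.sum_le_sum fun w _ => le_max_left _ _
        _ ≤ ∑ w, max (R y w - R z w) 0 :=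
            Finset.sum_le_sum_of_subset_of_nonneg (Finset.subset_univ A)
              fun w _ _ => le_max_right _ _
        _ ≤ D := hD y z)

end Aux

/-- **Non-homogeneous `V^{(m)}`-method: norms and the product bound.**
For each `t` and `m ≥ 1` the maximum row sum (of absolute values) of
`V_t^{(m)} := couplingMatrix (P_{t,t+m})` equals `1 - α_t^{(m)}`, and for all
`m, k ≥ 1`,
`sup_{x,x'} max_A (P_{0,km}(x,A) - P_{0,km}(x',A)) ≤ ∏_{t<k} ‖V_{tm}^{(m)}‖_∞`. -/
theorem nonhomogeneous_coupling_norm_bound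
    {S : Type*} [Fintype S] [DecidableEq S] [Nontrivial S]
    (P : ℕ → Matrix S S ℝ)
    (hnonneg : ∀ t x y, 0 ≤ P t x y) (hrow : ∀ t x, ∑ y, P t x y = 1) :
    (∀ t m : ℕ, 1 ≤ m →
      Finset.univ.sup' Finset.univ_nonempty
          (fun p : S × S => ∑ q : S × S, |couplingMatrix (transMat P t m) p q|)
        = 1 - Finset.univ.offDiag.inf'
            (by obtain ⟨a, b, hab⟩ := exists_pair_ne S
                exact ⟨(a, b), Finset.mem_offDiag.mpr
                  ⟨Finset.mem_univ _, Finset.mem_univ _, hab⟩⟩)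
            (fun p : S × S => mdCoeff (transMat P t m) p.1 p.2))
    ∧ ∀ m k : ℕ, 1 ≤ m → 1 ≤ k →
        ∀ (x x' : S) (A : Finset S),
          ∑ y ∈ A, transMat P 0 (k * m) x y - ∑ y ∈ A, transMat P 0 (k * m) x' y
            ≤ ∏ t ∈ Finset.range k,
                Finset.univ.sup' Finset.univ_nonempty
                  (fun p : S × S =>
                    ∑ q : S × S, |couplingMatrix (transMat P (t * m) m) p q|) := by
  have hb1 : ∀ k s x, ∑ y, transMat P s k x y = 1 := transMat_rowsum P hrow
  have hb0 : ∀ k s x y, 0 ≤ transMat P s k x y := transMat_nonneg P hnonneg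
  constructor
  · intro t m _
    have hrs : ∀ p : S × S,
        ∑ q : S × S, |couplingMatrix (transMat P t m) p q|
          = 1 - mdCoeff (transMat P t m) p.1 p.2 :=
      rowsum_abs_coupling _ (hb1 m t)
    have hαle : ∀ p : S × S, mdCoeff (transMat P t m) p.1 p.2 ≤ 1 :=
      fun p => mdCoeff_le_one _ _ _ (hb1 m t p.1)
    have hinfle : ∀ p ∈ Finset.univ.offDiag,
        (Finset.univ.offDiag.inf'
          (by obtain ⟨a, b, hab⟩ := exists_pair_ne S
              exact ⟨(a, b), Finset.mem_offDiag.mpr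
                ⟨Finset.mem_univ _, Finset.mem_univ _, hab⟩⟩)
          (fun p : S × S => mdCoeff (transMat P t m) p.1 p.2))
          ≤ mdCoeff (transMat P t m) p.1 p.2 :=
      fun p hp => Finset.inf'_le (fun p : S × S => mdCoeff (transMat P t m) p.1 p.2) hp
    obtain ⟨a, b, hab⟩ := exists_pair_ne S
    have habmem : ((a, b) : S × S) ∈ Finset.univ.offDiag :=
      Finset.mem_offDiag.mpr ⟨Finset.mem_univ _, Finset.mem_univ _, hab⟩
    apply le_antisymm
    · apply Finset.sup'_le
      intro p _
      rw [hrs p]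
      by_cases hp : p.1 = p.2
      · have hα1 : mdCoeff (transMat P t m) p.1 p.2 = 1 := by
          rw [mdCoeff, hp]
          simp [hb1 m t p.2]
        rw [hα1]
        have h1 := hinfle (a, b) habmem
        have h2 := hαle ((a, b) : S × S)
        linarith
      · have hpmem : p ∈ Finset.univ.offDiag :=
          Finset.mem_offDiag.mpr ⟨Finset.mem_univ _, Finset.mem_univ _, hp⟩
        have := hinfle p hpmem
        linarith
    · obtain ⟨q, hq, hqe⟩ := Finset.exists_mem_eq_inf'
        (⟨(a, b), habmem⟩ : Finset.Nonempty (Finset.univ.offDiag))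
        (fun p : S × S => mdCoeff (transMat P t m) p.1 p.2)
      rw [hqe, ← hrs q]
      exact Finset.le_sup'
        (fun p : S × S => ∑ q : S × S, |couplingMatrix (transMat P t m) p q|)
        (Finset.mem_univ q)
  · intro m k _ _ x x' A
    set N : ℕ → ℝ := fun t => Finset.univ.sup' Finset.univ_nonempty
      (fun p : S × S => ∑ q : S × S, |couplingMatrix (transMat P (t * m) m) p q|)
      with hNdef
    have hgN : ∀ t (y z : S),
        ∑ w, max (transMat P (t*m) m y w - transMat P (t*m) m z w) 0 ≤ N t := by
      intro t y z
      rw [posPart_sum_eq _ _ _ (hb1 m (t*m) y),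
        ← rowsum_abs_coupling _ (hb1 m (t*m)) ((y, z) : S × S)]
      have h := Finset.le_sup'
        (fun p : S × S => ∑ q : S × S, |couplingMatrix (transMat P (t * m) m) p q|)
        (Finset.mem_univ ((y, z) : S × S))
      exact h
    have hN0 : ∀ t, 0 ≤ N t := by
      intro t
      have h := hgN t x x
      have h2 : ∑ w, max (transMat P (t*m) m x w - transMat P (t*m) m x w) 0 = 0 := by
        simp
      linarith
    have main : ∀ j, ∀ u v : S,
        ∑ y, max (transMat P 0 (j*m) u y - transMat P 0 (j*m) v y) 0
          ≤ ∏ t ∈ Finset.range j, N t := by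
      intro j
      induction j with
      | zero =>
        intro u v
        rw [Finset.range_zero, Finset.prod_empty]
        exact posPart_sum_le_one _ u v (fun x y => hb0 (0*m) 0 x y) (hb1 (0*m) 0 u)
      | succ j ih =>
        intro u v
        have hsplit : transMat P 0 ((j+1)*m) = transMat P 0 (j*m) * transMat P (j*m) m := by
          rw [show (j+1)*m = j*m + m from by ring, transMat_add P (j*m) 0 m, Nat.zero_add]
        rw [hsplit]
        set M := transMat P 0 (j*m) * transMat P (j*m) m with hMdef
        set B : Finset S := Finset.univ.filter (fun y => 0 < M u y - M v y) with hBdef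
        have hAB : ∑ y, max (M u y - M v y) 0 = ∑ y ∈ B, M u y - ∑ y ∈ B, M v y := by
          rw [← Finset.sum_sub_distrib, hBdef, Finset.sum_filter]
          refine Finset.sum_congr rfl fun y _ => ?_
          rcases lt_or_ge 0 (M u y - M v y) with h | h
          · rw [if_pos h, max_eq_left h.le]
          · rw [if_neg (not_lt.mpr h), max_eq_right h]
        rw [hAB, Finset.prod_range_succ]
        calc ∑ y ∈ B, M u y - ∑ y ∈ B, M v y
            ≤ (∑ y, max (transMat P 0 (j*m) u y - transMat P 0 (j*m) v y) 0) * N j := by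
              rw [hMdef]
              exact key_step _ _ (hb1 (j*m) 0) (N j) (hgN j) u v B
          _ ≤ (∏ t ∈ Finset.range j, N t) * N j :=
              mul_le_mul_of_nonneg_right (ih u v) (hN0 j)
    calc ∑ y ∈ A, transMat P 0 (k * m) x y - ∑ y ∈ A, transMat P 0 (k * m) x' y
        = ∑ y ∈ A, (transMat P 0 (k*m) x y - transMat P 0 (k*m) x' y) :=
          (Finset.sum_sub_distrib _ _).symm
      _ ≤ ∑ y ∈ A, max (transMat P 0 (k*m) x y - transMat P 0 (k*m) x' y) 0 :=
          Finset.sum_le_sum fun y _ => le_max_left _ _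
      _ ≤ ∑ y, max (transMat P 0 (k*m) x y - transMat P 0 (k*m) x' y) 0 :=
          Finset.sum_le_sum_of_subset_of_nonneg (Finset.subset_univ A)
            fun y _ _ => le_max_right _ _
      _ ≤ ∏ t ∈ Finset.range k, N t := main k x x'
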